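/- arXiv:0804.2208 — 2 statements merged into one kernel-verified Lean document; each statement's English description precedes it below -/
import Mathlib

section
/- Let $I : \mathbb{R} \to [0,\infty]$ be convex, non-increasing, lower semicontinuous, with $I(\tau) = +\infty$ for $\tau < \tau^{\min}$, $I$ finite on $(\tau^{\min},\infty)$, and $I(\tau) = 0$ exactly for $\tau \ge \tilde\tau^q$. Let $\tau^{\lambda} = \inf_{\tau} \{\lambda\tau + I(\tau)\}$. Then $\tau^{\lambda}/\lambda \to \tilde\tau^q$ as $\lambda \to 0^+$ and $\tau^{\lambda}/\lambda \to \tau^{\min}$ as $\lambda \to +\infty$. -/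
open Filter Topology

/-!
Write `f(λ) = τ^λ / λ = inf_τ (τ + I(τ)/λ)`. Testing the infimum at `τ` gives
`f(λ) ≤ τ + I(τ)/λ`, and `I = +∞` below `τmin` gives `f(λ) ≥ τmin`. As `λ → ∞`, testing at
`τ` slightly above `τmin`, where `I` is finite, squeezes `f` down to `τmin`. As `λ → 0⁺`,
testing at `τ̃q` gives `f ≤ τ̃q`. Conversely, for `a < τ̃q`, points `τ ≥ a` contribute at
least `a`, and points `τ ∈ [τmin, a)` contribute at least `τmin + I(a)/λ` because `I` is
non-increasing; since `I(a) > 0`, this exceeds `a` once `λ` is small.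
-/

namespace LegendreInf

variable {I : ℝ → EReal} {τl : ℝ → ℝ} {l : ℝ}

theorem div_le_add_div
    (hτl : ((τl l : ℝ) : EReal) = ⨅ τ : ℝ, ((l * τ : ℝ) : EReal) + I τ) (hl : 0 < l)
    {τ c : ℝ} (hc : I τ ≤ c) : τl l / l ≤ τ + c / l := by
  have h : ((τl l : ℝ) : EReal) ≤ ((l * τ + c : ℝ) : EReal) := by
    rw [hτl, EReal.coe_add]
    exact (iInf_le _ τ).trans (add_le_add_right hc _)
  rw [div_le_iff₀ hl, add_mul, div_mul_cancel₀ _ hl.ne', mul_comm]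
  exact_mod_cast h

theorem le_div
    (hτl : ((τl l : ℝ) : EReal) = ⨅ τ : ℝ, ((l * τ : ℝ) : EReal) + I τ) (hl : 0 < l)
    {a : ℝ} (h : ∀ τ, ((l * a : ℝ) : EReal) ≤ ((l * τ : ℝ) : EReal) + I τ) : a ≤ τl l / l := by
  have h' : ((l * a : ℝ) : EReal) ≤ ((τl l : ℝ) : EReal) := hτl ▸ le_iInf h
  rw [le_div_iff₀ hl, mul_comm]
  exact_mod_cast h'

theorem min_le_div
    (hτl : ((τl l : ℝ) : EReal) = ⨅ τ : ℝ, ((l * τ : ℝ) : EReal) + I τ) (hl : 0 < l)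
    {τmin : ℝ} (hnonneg : ∀ τ : ℝ, 0 ≤ I τ) (hinf : ∀ τ : ℝ, τ < τmin → I τ = ⊤) :
    τmin ≤ τl l / l := by
  refine le_div hτl hl fun τ => ?_
  rcases lt_or_ge τ τmin with hτ | hτ
  · rw [hinf τ hτ, EReal.coe_add_top]
    exact le_top
  · have : l * τmin ≤ l * τ := mul_le_mul_of_nonneg_left hτ hl.le
    exact (EReal.coe_le_coe_iff.2 this).trans (le_add_of_nonneg_right (hnonneg τ))

theorem eventually_lt_div_nhdsGT
    (hτl : ∀ l : ℝ, 0 < l → ((τl l : ℝ) : EReal) = ⨅ τ : ℝ, ((l * τ : ℝ) : EReal) + I τ)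
    {τmin τq : ℝ} (hnonneg : ∀ τ : ℝ, 0 ≤ I τ) (hmono : ∀ x y : ℝ, x ≤ y → I y ≤ I x)
    (hinf : ∀ τ : ℝ, τ < τmin → I τ = ⊤) (hzero : ∀ τ : ℝ, I τ = 0 ↔ τq ≤ τ)
    {a : ℝ} (ha : a < τq) : ∀ᶠ l in 𝓝[>] 0, a < τl l / l := by
  obtain ⟨a', haa', ha'q⟩ := exists_between ha
  have hIa' : 0 < I a' :=
    (hnonneg a').lt_of_ne fun h => ha'q.not_ge ((hzero a').1 h.symm)
  obtain ⟨c, hc0, hca'⟩ := EReal.lt_iff_exists_real_btwn.1 hIa'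
  have hsmall : ∀ᶠ l in 𝓝[>] (0 : ℝ), l * (a' - τmin) < c := by
    have : Tendsto (fun l : ℝ => l * (a' - τmin)) (𝓝[>] 0) (𝓝 0) :=
      ((continuous_mul_const _).tendsto' 0 0 (zero_mul _)).mono_left nhdsWithin_le_nhds
    exact this.eventually (gt_mem_nhds (EReal.coe_pos.1 hc0))
  filter_upwards [hsmall, self_mem_nhdsWithin] with l hlc (hl : 0 < l)
  refine haa'.trans_le (le_div (hτl l hl) hl fun τ => ?_)
  rcases lt_or_ge τ τmin with hτmin | hτmin
  · rw [hinf τ hτmin, EReal.coe_add_top]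
    exact le_top
  rcases le_or_gt a' τ with hτ | hτ
  · have : l * a' ≤ l * τ := mul_le_mul_of_nonneg_left hτ hl.le
    exact (EReal.coe_le_coe_iff.2 this).trans (le_add_of_nonneg_right (hnonneg τ))
  · -- `τ < a'` pays at least `c`, which beats the gain `l * (a' - τ) ≤ l * (a' - τmin)`
    have hreal : l * a' ≤ l * τ + c := by nlinarith
    calc ((l * a' : ℝ) : EReal) ≤ ((l * τ : ℝ) : EReal) + c := mod_cast hreal
      _ ≤ ((l * τ : ℝ) : EReal) + I τ :=
        add_le_add_right (hca'.le.trans (hmono τ a' hτ.le)) _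

theorem eventually_div_lt_atTop
    (hτl : ∀ l : ℝ, 0 < l → ((τl l : ℝ) : EReal) = ⨅ τ : ℝ, ((l * τ : ℝ) : EReal) + I τ)
    {τmin : ℝ} (hnonneg : ∀ τ : ℝ, 0 ≤ I τ) (hfin : ∀ τ : ℝ, τmin < τ → I τ < ⊤)
    {b : ℝ} (hb : τmin < b) : ∀ᶠ l in atTop, τl l / l < b := by
  obtain ⟨τ, hτmin, hτb⟩ := exists_between hb
  have hc : I τ = ((I τ).toReal : EReal) :=
    (EReal.coe_toReal (hfin τ hτmin).ne (ne_bot_of_le_ne_bot (by simp) (hnonneg τ))).symm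
  have hsmall : ∀ᶠ l in atTop, (I τ).toReal / l < b - τ :=
    (tendsto_const_nhds.div_atTop tendsto_id).eventually (gt_mem_nhds (sub_pos.2 hτb))
  filter_upwards [hsmall, eventually_gt_atTop 0] with l hlc hl
  have := div_le_add_div (hτl l hl) hl hc.le
  linarith

end LegendreInf

open LegendreInf

theorem stmt2_general (I : ℝ → EReal) (τmin τq : ℝ)
    (hnonneg : ∀ τ : ℝ, 0 ≤ I τ)
    (hmono : ∀ x y : ℝ, x ≤ y → I y ≤ I x)
    (hinf : ∀ τ : ℝ, τ < τmin → I τ = ⊤)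
    (hfin : ∀ τ : ℝ, τmin < τ → I τ < ⊤)
    (hzero : ∀ τ : ℝ, I τ = 0 ↔ τq ≤ τ)
    (τl : ℝ → ℝ)
    (hτl : ∀ l : ℝ, 0 < l → ((τl l : ℝ) : EReal) = ⨅ τ : ℝ, ((l * τ : ℝ) : EReal) + I τ) :
    Tendsto (fun l : ℝ => τl l / l) (nhdsWithin 0 (Set.Ioi 0)) (nhds τq) ∧
    Tendsto (fun l : ℝ => τl l / l) atTop (nhds τmin) := by
  have hIq : I τq ≤ ((0 : ℝ) : EReal) := ((hzero τq).2 le_rfl).le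
  have hle_q : ∀ l, 0 < l → τl l / l ≤ τq := fun l hl => by
    simpa using div_le_add_div (hτl l hl) hl hIq
  refine ⟨tendsto_order.2 ⟨fun a ha => ?_, fun b hb => ?_⟩,
    tendsto_order.2 ⟨fun a ha => ?_, fun b hb => ?_⟩⟩
  · exact eventually_lt_div_nhdsGT hτl hnonneg hmono hinf hzero ha
  · filter_upwards [self_mem_nhdsWithin] with l (hl : 0 < l)
    exact (hle_q l hl).trans_lt hb
  · filter_upwards [eventually_gt_atTop 0] with l hl
    exact ha.trans_le (min_le_div (hτl l hl) hl hnonneg hinf)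
  · exact eventually_div_lt_atTop hτl hnonneg hfin hb

/-- Asymptotics of the Legendre transform `τ^λ = inf_τ {λτ + I(τ)}` of the rate
function `I`: `τ^λ/λ → τ̃q` as `λ → 0⁺` and `τ^λ/λ → τmin` as `λ → +∞`, where
`I = +∞` below `τmin`, `I` is finite on `(τmin,∞)`, and `I` vanishes exactly
on `[τ̃q, ∞)`. -/
theorem stmt2 (I : ℝ → EReal) (τmin τq : ℝ)
    (hnonneg : ∀ τ : ℝ, 0 ≤ I τ)
    (hconv : ∀ x y t : ℝ, 0 ≤ t → t ≤ 1 →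
      I (t * x + (1 - t) * y) ≤ (t : EReal) * I x + ((1 - t : ℝ) : EReal) * I y)
    (hmono : ∀ x y : ℝ, x ≤ y → I y ≤ I x)
    (hlsc : LowerSemicontinuous I)
    (hinf : ∀ τ : ℝ, τ < τmin → I τ = ⊤)
    (hfin : ∀ τ : ℝ, τmin < τ → I τ < ⊤)
    (hzero : ∀ τ : ℝ, I τ = 0 ↔ τq ≤ τ)
    (τl : ℝ → ℝ)
    (hτl : ∀ l : ℝ, 0 < l → ((τl l : ℝ) : EReal) = ⨅ τ : ℝ, ((l * τ : ℝ) : EReal) + I τ) :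
    Tendsto (fun l : ℝ => τl l / l) (nhdsWithin 0 (Set.Ioi 0)) (nhds τq) ∧
    Tendsto (fun l : ℝ => τl l / l) atTop (nhds τmin) :=
  stmt2_general I τmin τq hnonneg hmono hinf hfin hzero τl hτl
end

section
/- Suppose $I_{\mathbf{n}} : \mathbb{R} \to [0,\infty]$ is such that $I_{\mathbf{n}}(\tau) = \sup_{\lambda > 0}\{\tau^{\lambda}(\mathbf{n}) - \lambda\tau\}$, and suppose $\limsup_{\lambda \to 0^+} \frac{\tau^{\lambda}(\mathbf{n}) - \lambda \tau^q(\mathbf{n})}{\lambda^2} \ge -c$ for some $c \in (0,\infty)$. Then $\limsup_{r \to 0^+} \frac{I_{\mathbf{n}}(\tau^q(\mathbf{n}) - r)}{r^2} \ge \frac{1}{4c}$. -/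
/-!
For every `d > c` there are arbitrarily small `λ > 0` with `τ^λ - λ τ^q > -d λ²`.
For such `λ` put `r = 2 d λ`; the Legendre formula gives
`I(τ^q - r) ≥ τ^λ - λ (τ^q - r) > -d λ² + 2 d λ² = r² / (4 d)`, and `r → 0⁺` as `λ → 0⁺`. Hence the limsup is at least `1 / (4 d)`, and `d ↓ c` finishes.
-/

open Filter Topology

theorem tendsto_const_mul_nhdsGT_zero {x : ℝ} (hx : 0 < x) :
    Tendsto (x * ·) (𝓝[>] 0) (𝓝[>] 0) :=
  tendsto_iff_comap.2 (comap_mulLeft_nhdsGT_zero hx).ge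

theorem frequently_neg_mul_sq_lt_of_le_limsup {f : ℝ → ℝ} {c d : ℝ} (hcd : c < d)
    (h : ((-c : ℝ) : EReal) ≤ limsup (fun l : ℝ => ((f l / l ^ 2 : ℝ) : EReal)) (𝓝[>] 0)) :
    ∃ᶠ l in 𝓝[>] 0, -d * l ^ 2 < f l := by
  have hlt : ((-d : ℝ) : EReal) < limsup (fun l : ℝ => ((f l / l ^ 2 : ℝ) : EReal)) (𝓝[>] 0) :=
    lt_of_lt_of_le (EReal.coe_lt_coe_iff.2 (neg_lt_neg hcd)) h
  refine ((frequently_lt_of_lt_limsup (h := hlt)).and_eventually self_mem_nhdsWithin).mono ?_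
  rintro l ⟨hfl, hl⟩
  exact (lt_div_iff₀ (pow_pos hl 2)).1 (EReal.coe_lt_coe_iff.1 hfl)

theorem inv_four_mul_le_of_neg_mul_sq_lt {b t d l : ℝ} (hd : 0 < d) (hl : 0 < l)
    (hb : -d * l ^ 2 < b - l * t) :
    1 / (4 * d) ≤ (b - l * (t - 2 * d * l)) * ((2 * d * l) ^ 2)⁻¹ := by
  have hmain : d * l ^ 2 ≤ b - l * (t - 2 * d * l) := by nlinarith
  calc 1 / (4 * d) = d * l ^ 2 * ((2 * d * l) ^ 2)⁻¹ := by field_simp; ring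
    _ ≤ (b - l * (t - 2 * d * l)) * ((2 * d * l) ^ 2)⁻¹ := by gcongr

theorem inv_four_mul_le_limsup_of_frequently {τl : ℝ → ℝ} {τq : ℝ} {In : ℝ → EReal}
    (hIn : ∀ τ : ℝ, In τ = ⨆ l ∈ Set.Ioi (0 : ℝ), ((τl l - l * τ : ℝ) : EReal))
    {d : ℝ} (hd : 0 < d) (hfreq : ∃ᶠ l in 𝓝[>] 0, -d * l ^ 2 < τl l - l * τq) :
    ((1 / (4 * d) : ℝ) : EReal) ≤
      limsup (fun r : ℝ => In (τq - r) * (((r ^ 2)⁻¹ : ℝ) : EReal)) (𝓝[>] 0) := by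
  have hscale := tendsto_const_mul_nhdsGT_zero (by positivity : 0 < 2 * d)
  refine le_limsup_of_frequently_le'
    (hscale.frequently ((hfreq.and_eventually self_mem_nhdsWithin).mono ?_))
  rintro l ⟨hb, hl⟩
  have hlegendre : ((τl l - l * (τq - 2 * d * l) : ℝ) : EReal) ≤ In (τq - 2 * d * l) :=
    hIn _ ▸ le_biSup (fun x : ℝ => ((τl x - x * (τq - 2 * d * l) : ℝ) : EReal)) hl
  calc ((1 / (4 * d) : ℝ) : EReal)
      ≤ ((τl l - l * (τq - 2 * d * l) : ℝ) : EReal) * (((2 * d * l) ^ 2)⁻¹ : ℝ) := by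
        rw [← EReal.coe_mul]
        exact EReal.coe_le_coe_iff.2 (inv_four_mul_le_of_neg_mul_sq_lt hd hl hb)
    _ ≤ In (τq - 2 * d * l) * (((2 * d * l) ^ 2)⁻¹ : ℝ) :=
        mul_le_mul_of_nonneg_right hlegendre (EReal.coe_nonneg.2 (by positivity))

theorem stmt10_general (τl : ℝ → ℝ) (τq : ℝ) (In : ℝ → EReal)
    (hIn : ∀ τ : ℝ, In τ = ⨆ l ∈ Set.Ioi (0 : ℝ), ((τl l - l * τ : ℝ) : EReal))
    (c : ℝ)
    (hlimsup : ((-c : ℝ) : EReal) ≤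
      limsup (fun l : ℝ => (((τl l - l * τq) / l ^ 2 : ℝ) : EReal))
        (nhdsWithin 0 (Set.Ioi 0))) :
    ((1 / (4 * c) : ℝ) : EReal) ≤
      limsup (fun r : ℝ => In (τq - r) * (((r ^ 2)⁻¹ : ℝ) : EReal))
        (nhdsWithin 0 (Set.Ioi 0)) := by
  have key : ∀ d, c < d → 0 < d → ((1 / (4 * d) : ℝ) : EReal) ≤
      limsup (fun r : ℝ => In (τq - r) * (((r ^ 2)⁻¹ : ℝ) : EReal)) (𝓝[>] 0) :=
    fun d hcd hd => inv_four_mul_le_limsup_of_frequently hIn hd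
      (frequently_neg_mul_sq_lt_of_le_limsup hcd hlimsup)
  rcases le_or_gt c 0 with hc | hc
  · refine le_trans (EReal.coe_le_coe_iff.2 ?_) (key 1 (by linarith) one_pos)
    have : 1 / (4 * c) ≤ 0 := div_nonpos_of_nonneg_of_nonpos zero_le_one (by linarith)
    linarith
  · have hcont : Tendsto (fun d : ℝ => ((1 / (4 * d) : ℝ) : EReal)) (𝓝[>] c)
        (𝓝 ((1 / (4 * c) : ℝ) : EReal)) :=
      (continuous_coe_real_ereal.tendsto _).comp
        ((continuousAt_const.div (continuousAt_const.mul continuousAt_id)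
          (mul_ne_zero four_ne_zero hc.ne')).tendsto.mono_left nhdsWithin_le_nhds)
    refine le_of_tendsto hcont ?_
    filter_upwards [self_mem_nhdsWithin] with d hd using key d hd (hc.trans hd)

/-- Lemma `lem-dual-as-Itau`: if `I_n(τ) = sup_{λ>0} {τ^λ(n) - λτ}` and
`limsup_{λ→0⁺} (τ^λ(n) - λ τ^q(n))/λ² ≥ -c` with `c ∈ (0,∞)`, then
`limsup_{r→0⁺} I_n(τ^q(n) - r)/r² ≥ 1/(4c)`. -/
theorem stmt10 (τl : ℝ → ℝ) (τq : ℝ) (In : ℝ → EReal)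
    (hIn : ∀ τ : ℝ, In τ = ⨆ l ∈ Set.Ioi (0 : ℝ), ((τl l - l * τ : ℝ) : EReal))
    (c : ℝ) (hc : 0 < c)
    (hlimsup : ((-c : ℝ) : EReal) ≤
      limsup (fun l : ℝ => (((τl l - l * τq) / l ^ 2 : ℝ) : EReal))
        (nhdsWithin 0 (Set.Ioi 0))) :
    ((1 / (4 * c) : ℝ) : EReal) ≤
      limsup (fun r : ℝ => In (τq - r) * (((r ^ 2)⁻¹ : ℝ) : EReal))
        (nhdsWithin 0 (Set.Ioi 0)) :=
  stmt10_general τl τq In hIn c hlimsup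
end
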